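/- Let X be a locally compact Hausdorff space and let k : X × X → [0,∞) be a continuous, symmetric, nonnegative (finite-valued) kernel. For every H ⊆ X and every compact L ⊆ X, the rendezvous set equals the average set: R(H,L) = A(H,L). -/

import Mathlib

open MeasureTheory Set ENNReal Filter

variable {X : Type*}

/-- The potential `U^μ(x) = ∫ k(x,y) dμ(y)` of a measure `μ` with respect to the kernel `k`. -/
noncomputable def potential [MeasurableSpace X] (k : X → X → ℝ≥0∞) (μ : Measure X) (x : X) :
    ℝ≥0∞ :=
  ∫⁻ y, k x y ∂μ

/-- `M1 H` : the regular Borel probability measures concentrated on `H`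
(i.e. with outer measure of `H` equal to `1`). -/
def M1 [TopologicalSpace X] [MeasurableSpace X] (H : Set X) : Set (Measure X) :=
  {μ | IsProbabilityMeasure μ ∧ μ.Regular ∧ μ H = 1}

/-- `M1sharp H` : finite convex combinations of Dirac measures at points of `H`. -/
def M1sharp [MeasurableSpace X] (H : Set X) : Set (Measure X) :=
  {μ | ∃ (n : ℕ) (w : Fin n → X) (α : Fin n → ℝ≥0∞),
    (∀ j, w j ∈ H) ∧ (∑ j, α j = 1) ∧ μ = ∑ j, α j • Measure.dirac (w j)}

/-- The quasi-uniform energy `q(H,L)`. -/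
noncomputable def qEnergy [TopologicalSpace X] [MeasurableSpace X] (k : X → X → ℝ≥0∞)
    (H L : Set X) : ℝ≥0∞ :=
  ⨅ μ ∈ M1 H, ⨆ x ∈ L, potential k μ x

/-- The restricted quasi-uniform energy `q^#(H,L)`. -/
noncomputable def qEnergySharp [MeasurableSpace X] (k : X → X → ℝ≥0∞) (H L : Set X) : ℝ≥0∞ :=
  ⨅ μ ∈ M1sharp H, ⨆ x ∈ L, potential k μ x

/-- The dual energy `q̲(H,L)`. -/
noncomputable def qEnergyLow [TopologicalSpace X] [MeasurableSpace X] (k : X → X → ℝ≥0∞)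
    (H L : Set X) : ℝ≥0∞ :=
  ⨆ μ ∈ M1 H, ⨅ x ∈ L, potential k μ x

/-- The restricted dual energy `q̲^#(H,L)`. -/
noncomputable def qEnergyLowSharp [MeasurableSpace X] (k : X → X → ℝ≥0∞) (H L : Set X) : ℝ≥0∞ :=
  ⨆ μ ∈ M1sharp H, ⨅ x ∈ L, potential k μ x

/-- The `n`-th Chebyshev constant `M_n(H,L)`. -/
noncomputable def chebM (k : X → X → ℝ≥0∞) (H L : Set X) (n : ℕ) : ℝ≥0∞ :=
  ⨆ (w : Fin n → X) (_ : ∀ j, w j ∈ H), ⨅ x ∈ L, (∑ j, k x (w j)) / (n : ℝ≥0∞)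

/-- The `n`-th dual Chebyshev constant `M̄_n(H,L)`. -/
noncomputable def chebMbar (k : X → X → ℝ≥0∞) (H L : Set X) (n : ℕ) : ℝ≥0∞ :=
  ⨅ (w : Fin n → X) (_ : ∀ j, w j ∈ H), ⨆ x ∈ L, (∑ j, k x (w j)) / (n : ℝ≥0∞)

/-- The `n`-th diameter `D_n(H)`. -/
noncomputable def diamN (k : X → X → ℝ≥0∞) (H : Set X) (n : ℕ) : ℝ≥0∞ :=
  ⨅ (w : Fin n → X) (_ : ∀ j, w j ∈ H),
    (2 * ∑ p ∈ Finset.univ.filter (fun p : Fin n × Fin n => p.1 < p.2), k (w p.1) (w p.2)) /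
      ((n : ℝ≥0∞) * ((n : ℝ≥0∞) - 1))

/-- The `n`-th rendezvous set `R_n(H,L)`. -/
noncomputable def rendezvousN (k : X → X → ℝ≥0∞) (H L : Set X) (n : ℕ) : Set ℝ≥0∞ :=
  ⋂ (w : Fin n → X) (_ : ∀ j, w j ∈ H),
    Icc (⨅ x ∈ L, (∑ j, k x (w j)) / (n : ℝ≥0∞)) (⨆ x ∈ L, (∑ j, k x (w j)) / (n : ℝ≥0∞))

/-- The rendezvous set `R(H,L) = ⋂_{n ≥ 1} R_n(H,L)`. -/
noncomputable def rendezvous (k : X → X → ℝ≥0∞) (H L : Set X) : Set ℝ≥0∞ :=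
  ⋂ n : ℕ, rendezvousN k H L (n + 1)

/-- The average set `A(H,L)`. -/
noncomputable def averageSet [TopologicalSpace X] [MeasurableSpace X] (k : X → X → ℝ≥0∞)
    (H L : Set X) : Set ℝ≥0∞ :=
  ⋂ μ ∈ M1 H, Icc (⨅ x ∈ L, potential k μ x) (⨆ x ∈ L, potential k μ x)

/-!
Empirical measures of points of `H` belong to `M1 H`, and their potentials are the averages of
`k(·, w_j)`; hence `A(H,L) ⊆ R(H,L)`.

Conversely, fix `μ ∈ M1 H` and a compact `K` with `μ K > 0`. In the Banach space `C(L)` the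
Bochner integral of `y ↦ k(·, y)` against the conditioned measure `μ[|K]` lies in the closed
convex hull of `{k(·, y) | y ∈ H}`, and after rounding the weights, equal-weight averages over
points of `H` approximate it uniformly on `L`. So every `t ∈ R(H,L)` lies between the infimum and
the supremum over `L` of the potential of `μ[|K]`. Inner regularity lets `K` exhaust `μ`: for the
supremum because `μ K → 1`, for the infimum because the potentials of `μ` restricted to an
increasing sequence of compacts are continuous on `L` and increase to `U^μ`, so by compactness of
`L` one of them already exceeds any level below `inf_L U^μ` (a Dini-type argument).
-/

open scoped NNReal
open ProbabilityTheory

section Rounding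

variable {ι : Type*} [Fintype ι]

theorem exists_nat_sum_eq_abs_sub_le [Nonempty ι] {α : ι → ℝ} (hα₀ : ∀ i, 0 ≤ α i)
    (hα₁ : ∑ i, α i = 1) (N : ℕ) :
    ∃ m : ι → ℕ, ∑ i, m i = N ∧ ∀ i, |(m i : ℝ) - N * α i| ≤ Fintype.card ι := by
  classical
  set f : ι → ℕ := fun i => ⌊N * α i⌋₊
  have hf_le (i : ι) : (f i : ℝ) ≤ N * α i := Nat.floor_le (by have := hα₀ i; positivity)
  have hf_gt (i : ι) : N * α i < f i + 1 := Nat.lt_floor_add_one _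
  have hsum_le : ((∑ i, f i : ℕ) : ℝ) ≤ N := by
    push_cast
    calc ∑ i, (f i : ℝ) ≤ ∑ i, N * α i := Finset.sum_le_sum fun i _ => hf_le i
      _ = N := by rw [← Finset.mul_sum, hα₁, mul_one]
  -- the rounding defect `r ≤ card ι` is added at a single index
  set r := N - ∑ i, f i
  have hr : (r : ℝ) ≤ Fintype.card ι := by
    have hcast : (r : ℝ) = N - ∑ i, (f i : ℝ) := by
      rw [Nat.cast_sub (by exact_mod_cast hsum_le), Nat.cast_sum]
    have : (N : ℝ) ≤ ∑ i, ((f i : ℝ) + 1) := by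
      calc (N : ℝ) = ∑ i, N * α i := by rw [← Finset.mul_sum, hα₁, mul_one]
        _ ≤ _ := Finset.sum_le_sum fun i _ => (hf_gt i).le
    rw [Finset.sum_add_distrib, Finset.sum_const, Finset.card_univ, nsmul_one] at this
    linarith
  have hcard : (1 : ℝ) ≤ Fintype.card ι := by exact_mod_cast Fintype.card_pos
  set i₀ := Classical.arbitrary ι
  refine ⟨fun i => f i + if i = i₀ then r else 0, ?_, fun i => ?_⟩
  · have : ∑ i, f i ≤ N := by exact_mod_cast hsum_le
    rw [Finset.sum_add_distrib, Finset.sum_ite_eq' Finset.univ i₀]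
    simp only [Finset.mem_univ, if_true]
    omega
  · have hs : (0 : ℝ) ≤ ((if i = i₀ then r else 0 : ℕ) : ℝ) ∧
        ((if i = i₀ then r else 0 : ℕ) : ℝ) ≤ r := by
      split_ifs <;> simp
    rw [Nat.cast_add, abs_le]
    constructor <;> linarith [hf_le i, hf_gt i]

theorem exists_fin_sum_comp_eq_sum_nsmul {M : Type*} [AddCommMonoid M] (m : ι → ℕ) {N : ℕ}
    (hN : ∑ i, m i = N) : ∃ c : Fin N → ι, ∀ f : ι → M, ∑ j, f (c j) = ∑ i, m i • f i := by
  let e : (Σ i, Fin (m i)) ≃ Fin N := Fintype.equivFinOfCardEq (by simp [hN])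
  refine ⟨fun j => (e.symm j).1, fun f => ?_⟩
  rw [e.symm.sum_comp (fun x => f x.1), Fintype.sum_sigma]
  simp

variable {E : Type*} [NormedAddCommGroup E] [NormedSpace ℝ E]

theorem exists_average_near_of_mem_convexHull {s : Set E} {g : E} (hg : g ∈ convexHull ℝ s)
    {ε : ℝ} (hε : 0 < ε) :
    ∃ (n : ℕ) (w : Fin (n + 1) → E), (∀ j, w j ∈ s) ∧
      ‖((n + 1 : ℕ) : ℝ)⁻¹ • ∑ j, w j - g‖ < ε := by
  obtain ⟨ι, _, α, z, hα₀, hα₁, hz, rfl⟩ := mem_convexHull_iff_exists_fintype.mp hg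
  have : Nonempty ι := by
    by_contra h
    rw [not_nonempty_iff] at h
    simp at hα₁
  set C := Fintype.card ι * ∑ i, ‖z i‖
  obtain ⟨n, hn⟩ := exists_nat_gt (C / ε)
  set N := n + 1
  have hN : (0 : ℝ) < N := by positivity
  obtain ⟨m, hm, hmα⟩ := exists_nat_sum_eq_abs_sub_le hα₀ hα₁ N
  obtain ⟨c, hc⟩ := exists_fin_sum_comp_eq_sum_nsmul (M := E) m hm
  refine ⟨n, z ∘ c, fun j => hz _, ?_⟩
  have hdiff : (N : ℝ)⁻¹ • ∑ j, (z ∘ c) j - ∑ i, α i • z i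
      = ∑ i, ((N : ℝ)⁻¹ * (m i - N * α i)) • z i := by
    simp only [Function.comp_apply, hc z, Finset.smul_sum, ← Finset.sum_sub_distrib,
      ← Nat.cast_smul_eq_nsmul ℝ, smul_smul, ← sub_smul]
    congr 1; ext i; congr 1; field_simp
  rw [hdiff]
  calc ‖∑ i, ((N : ℝ)⁻¹ * (m i - N * α i)) • z i‖
      ≤ ∑ i, (N : ℝ)⁻¹ * Fintype.card ι * ‖z i‖ := by
        refine (norm_sum_le _ _).trans (Finset.sum_le_sum fun i _ => ?_)
        rw [norm_smul, norm_mul, norm_inv, Real.norm_eq_abs, Real.norm_eq_abs, abs_of_pos hN]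
        exact mul_le_mul_of_nonneg_right (mul_le_mul_of_nonneg_left (hmα i) (by positivity))
          (norm_nonneg _)
    _ = C / N := by rw [← Finset.mul_sum, div_eq_inv_mul, mul_assoc]
    _ < ε := by
        rw [div_lt_iff₀ hN]
        rw [div_lt_iff₀ hε] at hn
        have : (n : ℝ) < N := by simp [N]
        nlinarith

theorem exists_average_near_of_mem_closure_convexHull {s : Set E} {g : E}
    (hg : g ∈ closure (convexHull ℝ s)) {ε : ℝ} (hε : 0 < ε) :
    ∃ (n : ℕ) (w : Fin (n + 1) → E), (∀ j, w j ∈ s) ∧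
      ‖((n + 1 : ℕ) : ℝ)⁻¹ • ∑ j, w j - g‖ < ε := by
  obtain ⟨g', hg', hgg'⟩ := Metric.mem_closure_iff.mp hg (ε / 2) (half_pos hε)
  obtain ⟨n, w, hw, hwg'⟩ := exists_average_near_of_mem_convexHull hg' (half_pos hε)
  refine ⟨n, w, hw, ?_⟩
  rw [dist_eq_norm] at hgg'
  calc _ ≤ ‖((n + 1 : ℕ) : ℝ)⁻¹ • ∑ j, w j - g'‖ + ‖g' - g‖ :=
        norm_sub_le_norm_sub_add_norm_sub _ _ _
    _ < ε / 2 + ε / 2 := add_lt_add hwg' (by rwa [norm_sub_rev])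
    _ = ε := add_halves ε

end Rounding

section Integral

variable [MeasurableSpace X] {ν : Measure X}

theorem ae_mem_of_measure_eq_one [IsProbabilityMeasure ν] {H S : Set X} (hH : ν H = 1)
    (hS : MeasurableSet S) (hHS : H ⊆ S) : ∀ᵐ y ∂ν, y ∈ S :=
  (ae_iff_measure_eq hS.nullMeasurableSet).2 <|
    le_antisymm (measure_mono (subset_univ S))
      (by rw [measure_univ, ← hH]; exact measure_mono hHS)

variable [TopologicalSpace X] [OpensMeasurableSpace X] [T2Space X]
  {E : Type*} [NormedAddCommGroup E]

theorem Continuous.integrable_of_measure_compl_eq_zero [IsFiniteMeasure ν] {f : X → E}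
    (hf : Continuous f) {K : Set X} (hK : IsCompact K) (hνK : ν Kᶜ = 0) : Integrable f ν := by
  have := hf.continuousOn.integrableOn_compact (μ := ν) hK
  rwa [IntegrableOn, Measure.restrict_eq_self_of_ae_mem (mem_ae_iff.2 hνK)] at this

theorem integral_mem_closure_convexHull_image [NormedSpace ℝ E] [CompleteSpace E]
    [IsProbabilityMeasure ν] {f : X → E} (hf : Continuous f) {H K : Set X} (hH : ν H = 1)
    (hK : IsCompact K) (hνK : ν Kᶜ = 0) : ∫ y, f y ∂ν ∈ closure (convexHull ℝ (f '' H)) :=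
  (convex_convexHull ℝ _).closure.integral_mem isClosed_closure
    (ae_mem_of_measure_eq_one hH (isClosed_closure.preimage hf).measurableSet
      fun _ hy => subset_closure (subset_convexHull ℝ _ (mem_image_of_mem f hy)))
    (hf.integrable_of_measure_compl_eq_zero hK hνK)

end Integral

section Kernel

variable {Y : Type*} [TopologicalSpace Y] [TopologicalSpace X]

def kernelColumn (k : Y → X → ℝ) (hk : Continuous (Function.uncurry k)) : C(X, C(Y, ℝ)) :=
  ContinuousMap.curry ⟨fun p : X × Y => k p.2 p.1, hk.comp continuous_swap⟩

@[simp]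
theorem kernelColumn_apply (k : Y → X → ℝ) (hk : Continuous (Function.uncurry k)) (y : X)
    (x : Y) : kernelColumn k hk y x = k x y :=
  rfl

variable [CompactSpace Y] [MeasurableSpace X] [OpensMeasurableSpace X] [T2Space X]
  {ν : Measure X}

theorem exists_average_near_integral [IsProbabilityMeasure ν] (k : Y → X → ℝ)
    (hk : Continuous (Function.uncurry k)) {H K : Set X} (hH : ν H = 1) (hK : IsCompact K)
    (hνK : ν Kᶜ = 0) {ε : ℝ} (hε : 0 < ε) :
    ∃ (n : ℕ) (w : Fin (n + 1) → X), (∀ j, w j ∈ H) ∧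
      ∀ x, |(∑ j, k x (w j)) / (n + 1 : ℕ) - ∫ y, k x y ∂ν| < ε := by
  set F := kernelColumn k hk
  obtain ⟨n, v, hv, hvF⟩ := exists_average_near_of_mem_closure_convexHull
    (integral_mem_closure_convexHull_image F.continuous hH hK hνK) hε
  choose w hwH hwv using hv
  refine ⟨n, w, hwH, fun x => (le_of_eq ?_).trans_lt
    ((ContinuousMap.norm_coe_le_norm _ x).trans_lt hvF)⟩
  simp [ContinuousMap.integral_apply (F.continuous.integrable_of_measure_compl_eq_zero hK hνK),
    ← hwv, F, div_eq_inv_mul]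

theorem continuous_lintegral_of_measure_compl_eq_zero [IsFiniteMeasure ν] (k : Y → X → ℝ≥0)
    (hk : Continuous (Function.uncurry k)) {K : Set X} (hK : IsCompact K) (hνK : ν Kᶜ = 0) :
    Continuous fun x => ∫⁻ y, k x y ∂ν := by
  have hk' : Continuous (Function.uncurry fun x y => (k x y : ℝ)) :=
    NNReal.continuous_coe.comp hk
  set F := kernelColumn _ hk'
  have hF := F.continuous.integrable_of_measure_compl_eq_zero hK hνK
  convert ENNReal.continuous_ofReal.comp (∫ y, F y ∂ν).continuous with x
  rw [Function.comp_apply, ContinuousMap.integral_apply hF, lintegral_coe_eq_integral]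
  · rfl
  · exact (hk'.comp (Continuous.prodMk_right x)).integrable_of_measure_compl_eq_zero hK hνK

end Kernel

section Exhaustion

variable [TopologicalSpace X] [MeasurableSpace X]

theorem exists_monotone_isCompact_ae_mem_iUnion [OpensMeasurableSpace X] [T2Space X]
    (μ : Measure X) [IsFiniteMeasure μ] [μ.InnerRegularCompactLTTop] :
    ∃ K : ℕ → Set X, (∀ n, IsCompact (K n)) ∧ Monotone K ∧ ∀ᵐ y ∂μ, y ∈ ⋃ n, K n := by
  have (n : ℕ) : ∃ C, IsCompact C ∧ μ univ < μ C + (n : ℝ≥0∞)⁻¹ := by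
    obtain ⟨C, -, hC, hμC⟩ := MeasurableSet.univ.exists_isCompact_lt_add (measure_ne_top μ univ)
      (ENNReal.inv_ne_zero.2 (ENNReal.natCast_ne_top n))
    exact ⟨C, hC, hμC⟩
  choose C hC hμC using this
  refine ⟨accumulate C, isCompact_accumulate hC, monotone_accumulate, ?_⟩
  rw [iUnion_accumulate]
  refine mem_ae_iff.2 (le_antisymm (ENNReal.le_of_forall_pos_le_add fun ε hε _ => ?_) bot_le)
  obtain ⟨n, hn⟩ := ENNReal.exists_inv_nat_lt (ENNReal.coe_ne_zero.2 hε.ne')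
  calc μ (⋃ n, C n)ᶜ ≤ μ (C n)ᶜ := measure_mono (compl_subset_compl.2 (subset_iUnion C n))
    _ = μ univ - μ (C n) := measure_compl (hC n).measurableSet (measure_ne_top μ _)
    _ ≤ (n : ℝ≥0∞)⁻¹ := tsub_le_iff_left.2 (hμC n).le
    _ ≤ 0 + ε := by rw [zero_add]; exact hn.le

theorem exists_forall_lt_of_monotone_of_lt_iSup {Y α : Type*} [TopologicalSpace Y]
    [CompactSpace Y] [CompleteLinearOrder α] {f : ℕ → Y → α}
    (hf : ∀ n, LowerSemicontinuous (f n)) (hmono : Monotone f) {t : α}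
    (h : ∀ y, t < ⨆ n, f n y) : ∃ n, ∀ y, t < f n y := by
  obtain ⟨n, hn⟩ := isCompact_univ.elim_directed_cover (fun n => f n ⁻¹' Ioi t)
    (fun n => (hf n).isOpen_preimage t) (fun y _ => mem_iUnion.2 (lt_iSup_iff.1 (h y)))
    (Monotone.directed_le fun m n hmn y hy => lt_of_lt_of_le hy (hmono hmn y))
  exact ⟨n, fun y => hn (mem_univ y)⟩

end Exhaustion

section Potential

variable [MeasurableSpace X]

noncomputable def empiricalMeasure {n : ℕ} (w : Fin n → X) : Measure X :=
  (n : ℝ≥0∞)⁻¹ • ∑ j, Measure.dirac (w j)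

theorem potential_empiricalMeasure [MeasurableSingletonClass X] (k : X → X → ℝ≥0∞) {n : ℕ}
    (w : Fin n → X) (x : X) : potential k (empiricalMeasure w) x = (∑ j, k x (w j)) / n := by
  simp [potential, empiricalMeasure, ENNReal.div_eq_inv_mul]

theorem potential_cond (k : X → X → ℝ≥0∞) (μ : Measure X) (K : Set X) (x : X) :
    potential k μ[|K] x = (μ K)⁻¹ * ∫⁻ y in K, k x y ∂μ := by
  rw [potential, ProbabilityTheory.cond, lintegral_smul_measure, smul_eq_mul]

theorem cond_apply_eq_one_of_measure_eq_one (μ : Measure X) [IsProbabilityMeasure μ]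
    {H K : Set X} (hH : μ H = 1) (hK : MeasurableSet K) (hμK : μ K ≠ 0) : μ[H|K] = 1 := by
  rw [cond_apply hK, inter_comm, Measure.measure_inter_eq_of_measure_eq hK
    (hH.trans measure_univ.symm) (subset_univ H) (by simp [hH]), univ_inter,
    ENNReal.inv_mul_cancel hμK (measure_ne_top μ K)]

variable [TopologicalSpace X]

theorem regular_of_measure_compl_eq_zero_of_finite [T1Space X] [OpensMeasurableSpace X]
    (μ : Measure X) [IsFiniteMeasure μ] {F : Set X} (hF : F.Finite) (hμF : μ Fᶜ = 0) :
    μ.Regular := by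
  have : μ.OuterRegular := by
    refine ⟨fun A _ r hr => ⟨(F \ A)ᶜ, fun y hy hy' => hy'.2 hy,
      (hF.subset sdiff_subset).isClosed.isOpen_compl, lt_of_le_of_lt ?_ hr⟩⟩
    calc μ (F \ A)ᶜ = μ ((F \ A)ᶜ ∩ F) := (measure_inter_conull hμF).symm
      _ ≤ μ A := measure_mono fun y ⟨hy, hyF⟩ => by_contra fun hyA => hy ⟨hyF, hyA⟩
  exact ⟨fun U _ r hr => ⟨U ∩ F, inter_subset_left, (hF.inter_of_right U).isCompact,
    by rwa [measure_inter_conull hμF]⟩⟩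

theorem empiricalMeasure_mem_M1 [T1Space X] [OpensMeasurableSpace X] {H : Set X} {n : ℕ}
    {w : Fin (n + 1) → X} (hw : ∀ j, w j ∈ H) : empiricalMeasure w ∈ M1 H := by
  have hsum : ((n + 1 : ℕ) : ℝ≥0∞)⁻¹ * ∑ _j : Fin (n + 1), (1 : ℝ≥0∞) = 1 := by
    simp [ENNReal.inv_mul_cancel]
  have : IsProbabilityMeasure (empiricalMeasure w) := ⟨by simpa [empiricalMeasure] using hsum⟩
  refine ⟨this, regular_of_measure_compl_eq_zero_of_finite _ (finite_range w) ?_, ?_⟩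
  · simp [empiricalMeasure]
  · simpa [empiricalMeasure, Measure.dirac_apply_of_mem (hw _)] using hsum

end Potential

section Rendezvous

variable [TopologicalSpace X] [MeasurableSpace X]

theorem le_iSup_potential_of_forall_cond (μ : Measure X) [IsProbabilityMeasure μ] [μ.Regular]
    (k : X → X → ℝ≥0∞) (L : Set X) {t : ℝ≥0∞}
    (h : ∀ K, IsCompact K → μ K ≠ 0 → t ≤ ⨆ x ∈ L, potential k μ[|K] x) :
    t ≤ ⨆ x ∈ L, potential k μ x := by
  have hK (K : Set X) (hK : IsCompact K) : t * μ K ≤ ⨆ x ∈ L, potential k μ x := by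
    rcases eq_or_ne (μ K) 0 with h0 | h0
    · simp [h0]
    have hcond : ⨆ x ∈ L, potential k μ[|K] x ≤ (⨆ x ∈ L, potential k μ x) / μ K := by
      rw [ENNReal.div_eq_inv_mul]
      refine iSup₂_le fun x hx => ?_
      rw [potential_cond]
      gcongr
      exact (setLIntegral_le_lintegral _ _).trans
        (le_iSup₂ (f := fun x _ => potential k μ x) x hx)
    exact (ENNReal.le_div_iff_mul_le (Or.inl h0) (Or.inl (measure_ne_top μ K))).1
      ((h K hK h0).trans hcond)
  calc t = t * μ univ := by rw [measure_univ, mul_one]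
    _ = ⨆ (K : Set X) (_ : K ⊆ univ) (_ : IsCompact K), t * μ K := by
        simp only [isOpen_univ.measure_eq_iSup_isCompact μ, ENNReal.mul_iSup]
    _ ≤ ⨆ x ∈ L, potential k μ x := iSup_le fun K => iSup_le fun _ => iSup_le (hK K)

variable [OpensMeasurableSpace X] [T2Space X]

theorem exists_average_near_potential {k : X → X → ℝ≥0}
    (hk : Continuous fun p : X × X => k p.1 p.2) {H L K : Set X} (hL : IsCompact L)
    (hK : IsCompact K) {ν : Measure X} [IsProbabilityMeasure ν] (hH : ν H = 1)
    (hνK : ν Kᶜ = 0) {ε : ℝ≥0} (hε : 0 < ε) :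
    ∃ (n : ℕ) (w : Fin (n + 1) → X), (∀ j, w j ∈ H) ∧
      ∀ x ∈ L, (∑ j, (k x (w j) : ℝ≥0∞)) / (n + 1 : ℕ) ≤
          potential (fun x y => (k x y : ℝ≥0∞)) ν x + ε ∧
        potential (fun x y => (k x y : ℝ≥0∞)) ν x ≤
          (∑ j, (k x (w j) : ℝ≥0∞)) / (n + 1 : ℕ) + ε := by
  have : CompactSpace L := isCompact_iff_compactSpace.mp hL
  obtain ⟨n, w, hwH, hw⟩ := exists_average_near_integral (fun (x : L) y => (k x y : ℝ))
    (by fun_prop) hH hK hνK hε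
  refine ⟨n, w, hwH, fun x hx => ?_⟩
  have hpot : potential (fun x y => (k x y : ℝ≥0∞)) ν x =
      ENNReal.ofReal (∫ y, (k x y : ℝ) ∂ν) :=
    lintegral_coe_eq_integral _ ((NNReal.continuous_coe.comp (hk.comp
      (Continuous.prodMk_right x))).integrable_of_measure_compl_eq_zero hK hνK)
  have havg : (∑ j, (k x (w j) : ℝ≥0∞)) / (n + 1 : ℕ) =
      ENNReal.ofReal ((∑ j, (k x (w j) : ℝ)) / (n + 1 : ℕ)) := by
    rw [ENNReal.ofReal_div_of_pos (by positivity), ← NNReal.coe_sum, ENNReal.ofReal_coe_nnreal,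
      ENNReal.ofReal_natCast, ENNReal.ofNNReal_finsetSum]
  have hclose (a b : ℝ) (h : a - b < ε) : ENNReal.ofReal a ≤ ENNReal.ofReal b + ε :=
    (ENNReal.ofReal_le_ofReal (show a ≤ b + ε by linarith)).trans
      (ENNReal.ofReal_add_le.trans_eq (by rw [ENNReal.ofReal_coe_nnreal]))
  obtain ⟨h₁, h₂⟩ := abs_sub_lt_iff.1 (hw ⟨x, hx⟩)
  rw [hpot, havg]
  exact ⟨hclose _ _ h₁, hclose _ _ h₂⟩

theorem mem_Icc_potential_of_mem_rendezvous {k : X → X → ℝ≥0}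
    (hk : Continuous fun p : X × X => k p.1 p.2) {H L K : Set X} (hL : IsCompact L)
    (hK : IsCompact K) {ν : Measure X} [IsProbabilityMeasure ν] (hH : ν H = 1)
    (hνK : ν Kᶜ = 0) {t : ℝ≥0∞} (ht : t ∈ rendezvous (fun x y => (k x y : ℝ≥0∞)) H L) :
    t ∈ Icc (⨅ x ∈ L, potential (fun x y => (k x y : ℝ≥0∞)) ν x)
      (⨆ x ∈ L, potential (fun x y => (k x y : ℝ≥0∞)) ν x) := by
  simp only [rendezvous, rendezvousN, mem_iInter] at ht
  refine ⟨ENNReal.le_of_forall_pos_le_add fun ε hε _ => ?_,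
    ENNReal.le_of_forall_pos_le_add fun ε hε _ => ?_⟩
  · obtain ⟨n, w, hwH, hw⟩ := exists_average_near_potential hk hL hK hH hνK hε
    calc ⨅ x ∈ L, potential (fun x y => (k x y : ℝ≥0∞)) ν x
        ≤ ⨅ x ∈ L, ((∑ j, (k x (w j) : ℝ≥0∞)) / (n + 1 : ℕ) + ε) :=
          iInf₂_mono fun x hx => (hw x hx).2
      _ = (⨅ x ∈ L, (∑ j, (k x (w j) : ℝ≥0∞)) / (n + 1 : ℕ)) + ε := by
          simp only [ENNReal.iInf_add]
      _ ≤ t + ε := add_le_add (ht n w hwH).1 le_rfl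
  · obtain ⟨n, w, hwH, hw⟩ := exists_average_near_potential hk hL hK hH hνK hε
    refine (ht n w hwH).2.trans (iSup₂_le fun x hx => (hw x hx).1.trans ?_)
    exact add_le_add (le_iSup₂ (f := fun x _ => potential (fun x y => (k x y : ℝ≥0∞)) ν x)
      x hx) le_rfl

theorem iInf_potential_le_of_forall_cond (μ : Measure X) [IsProbabilityMeasure μ] [μ.Regular]
    {k : X → X → ℝ≥0} (hk : Continuous fun p : X × X => k p.1 p.2) {L : Set X}
    (hL : IsCompact L) {t : ℝ≥0∞}
    (h : ∀ K, IsCompact K → μ K ≠ 0 →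
      ⨅ x ∈ L, potential (fun x y => (k x y : ℝ≥0∞)) μ[|K] x ≤ t) :
    ⨅ x ∈ L, potential (fun x y => (k x y : ℝ≥0∞)) μ x ≤ t := by
  by_contra! ht
  obtain ⟨t', htt', ht'⟩ := exists_between ht
  obtain ⟨K, hKc, hKmono, hKae⟩ := exists_monotone_isCompact_ae_mem_iUnion μ
  have : CompactSpace L := isCompact_iff_compactSpace.mp hL
  have hcont (n : ℕ) : Continuous fun x : L => ∫⁻ y in K n, k x y ∂μ :=
    continuous_lintegral_of_measure_compl_eq_zero (fun (x : L) y => k x y) (by fun_prop) (hKc n)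
      (by simp [Measure.restrict_apply' (hKc n).measurableSet])
  have hlim (x : X) :
      potential (fun x y => (k x y : ℝ≥0∞)) μ x = ⨆ n, ∫⁻ y in K n, k x y ∂μ := by
    rw [potential, ← setLIntegral_iUnion_of_directed _ hKmono.directed_le,
      Measure.restrict_eq_self_of_ae_mem hKae]
  obtain ⟨n₀, hn₀⟩ := exists_forall_lt_of_monotone_of_lt_iSup
    (fun n => (hcont n).lowerSemicontinuous) (fun m n hmn x => lintegral_mono_set (hKmono hmn))
    (fun x => by rw [← hlim]; exact ht'.trans_le (biInf_le _ x.2))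
  obtain ⟨n₁, hn₁⟩ : ∃ n, μ (K n) ≠ 0 := by
    by_contra! h0
    have hcompl : μ (⋃ n, K n)ᶜ = 0 := mem_ae_iff.1 hKae
    have := measure_union_null (measure_iUnion_null h0) hcompl
    rw [union_compl_self, measure_univ] at this
    exact one_ne_zero this
  set n := max n₀ n₁
  have hμK : μ (K n) ≠ 0 := fun h0 => hn₁ (measure_mono_null (hKmono (le_max_right _ _)) h0)
  refine (h (K n) (hKc n) hμK).not_gt (htt'.trans_le (le_iInf₂ fun x hx => ?_))
  calc t' ≤ ∫⁻ y in K n₀, k x y ∂μ := (hn₀ ⟨x, hx⟩).le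
    _ ≤ ∫⁻ y in K n, k x y ∂μ := lintegral_mono_set (hKmono (le_max_left _ _))
    _ ≤ potential (fun x y => (k x y : ℝ≥0∞)) μ[|K n] x := by
        rw [potential_cond]
        exact le_mul_of_one_le_left' (ENNReal.one_le_inv.2 prob_le_one)

end Rendezvous

theorem rendezvous_eq_averageSet_general
    {X : Type*} [TopologicalSpace X] [T2Space X]
    [MeasurableSpace X] [BorelSpace X]
    (k : X → X → NNReal)
    (hk : Continuous fun p : X × X => k p.1 p.2)
    (H L : Set X) (hL : IsCompact L) :
    rendezvous (fun x y => (k x y : ℝ≥0∞)) H L =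
      averageSet (fun x y => (k x y : ℝ≥0∞)) H L := by
  ext t
  simp only [averageSet, mem_iInter]
  constructor
  · rintro ht μ ⟨hprob, hreg, hH⟩
    have hcond (K : Set X) (hK : IsCompact K) (hμK : μ K ≠ 0) :
        t ∈ Icc (⨅ x ∈ L, potential (fun x y => (k x y : ℝ≥0∞)) μ[|K] x)
          (⨆ x ∈ L, potential (fun x y => (k x y : ℝ≥0∞)) μ[|K] x) := by
      have := cond_isProbabilityMeasure (μ := μ) hμK
      exact mem_Icc_potential_of_mem_rendezvous hk hL hK
        (cond_apply_eq_one_of_measure_eq_one μ hH hK.measurableSet hμK)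
        (by simp [cond_apply hK.measurableSet]) ht
    exact ⟨iInf_potential_le_of_forall_cond μ hk hL fun K hK hμK => (hcond K hK hμK).1,
      le_iSup_potential_of_forall_cond μ _ L fun K hK hμK => (hcond K hK hμK).2⟩
  · simp only [rendezvous, rendezvousN, mem_iInter]
    intro ht n w hw
    simpa only [potential_empiricalMeasure] using ht _ (empiricalMeasure_mem_M1 hw)

/-- For a continuous, symmetric, finite-valued kernel and compact `L`,
`R(H,L) = A(H,L)` for every `H ⊆ X`. -/
theorem rendezvous_eq_averageSet
    {X : Type*} [TopologicalSpace X] [LocallyCompactSpace X] [T2Space X]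
    [MeasurableSpace X] [BorelSpace X]
    (k : X → X → NNReal)
    (hk : Continuous fun p : X × X => k p.1 p.2)
    (hksymm : ∀ x y, k x y = k y x)
    (H L : Set X) (hL : IsCompact L) :
    rendezvous (fun x y => (k x y : ℝ≥0∞)) H L =
      averageSet (fun x y => (k x y : ℝ≥0∞)) H L :=
  rendezvous_eq_averageSet_general k hk H L hL
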